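/- arXiv:1705.00968 — 4 statements merged into one kernel-verified Lean document; each statement's English description precedes it below -/
import Mathlib

section
/- Let n ≥ m ≥ 1 be integers and let L be the list of all pairs (i,j) ∈ ℕ × ℕ with i ≤ n, j ≤ m and i + j ≥ 1, arranged in strictly increasing normally-lexicographic order. Then any two consecutive elements (a,b) and (c,d) of L are linearly independent over ℝ, i.e. a·d − b·c ≠ 0. -/
/-- The normally-lexicographic strict order on `ℕ × ℕ`: `(a,b) ≺ (c,d)` iff
`a + b < c + d`, or `a + b = c + d` and `a < c`. -/
def NlLt2 (p q : ℕ × ℕ) : Prop :=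
  p.1 + p.2 < q.1 + q.2 ∨ (p.1 + p.2 = q.1 + q.2 ∧ p.1 < q.1)

lemma NlLt2.trans' {p q r : ℕ × ℕ} (h1 : NlLt2 p q) (h2 : NlLt2 q r) : NlLt2 p r := by
  unfold NlLt2 at *; omega

lemma NlLt2.asymm' {p q : ℕ × ℕ} (h1 : NlLt2 p q) (h2 : NlLt2 q p) : False := by
  unfold NlLt2 at *; omega

lemma nl_exists_between (n m : ℕ) (hm : 1 ≤ m) (hnm : m ≤ n) (p q : ℕ × ℕ)
    (hp : p.1 ≤ n ∧ p.2 ≤ m ∧ 1 ≤ p.1 + p.2)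
    (hq : q.1 ≤ n ∧ q.2 ≤ m ∧ 1 ≤ q.1 + q.2)
    (hpq : NlLt2 p q) (heq : p.1 * q.2 = p.2 * q.1) :
    ∃ r : ℕ × ℕ, r.1 ≤ n ∧ r.2 ≤ m ∧ 1 ≤ r.1 + r.2 ∧ NlLt2 p r ∧ NlLt2 r q := by
  obtain ⟨a, b⟩ := p
  obtain ⟨c, d⟩ := q
  simp only [NlLt2] at *
  obtain ⟨han, hbm, hab⟩ := hp
  obtain ⟨hcn, hdm, hcd⟩ := hq
  rcases Nat.eq_zero_or_pos a with ha | ha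
  · -- a = 0, b ≥ 1, so c = 0
    subst ha
    have hb : 1 ≤ b := by omega
    have hc : c = 0 := by
      have h0 : b * c = 0 := by simpa using heq.symm
      rcases Nat.mul_eq_zero.mp h0 with h | h
      · omega
      · exact h
    subst hc
    have hbd : b < d := by omega
    rcases Nat.lt_or_ge (b + 1) d with h | h
    · exact ⟨(0, b + 1), by omega, by omega, by omega, by omega, by omega⟩
    · exact ⟨(1, b - 1), by omega, by omega, by omega, by omega, by omega⟩
  rcases Nat.eq_zero_or_pos c with hc | hc
  · -- c = 0 with a ≥ 1 forces d = 0, impossible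
    subst hc
    have : a * d = 0 := by omega
    have hd : d = 0 := by
      rcases Nat.mul_eq_zero.mp this with h | h
      · omega
      · exact h
    omega
  rcases Nat.eq_zero_or_pos b with hb | hb
  · -- b = 0, so d = 0, a < c; take (a, 1)
    subst hb
    have : a * d = 0 := by omega
    have hd : d = 0 := by
      rcases Nat.mul_eq_zero.mp this with h | h
      · omega
      · exact h
    subst hd
    exact ⟨(a, 1), by omega, by omega, by omega, by omega, by omega⟩
  have hd : 1 ≤ d := by
    by_contra h
    have hd0 : d = 0 := by omega
    subst hd0
    have : b * c = 0 := by omega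
    rcases Nat.mul_eq_zero.mp this with h1 | h1 <;> omega
  -- all of a, b, c, d ≥ 1
  have hac : a < c := by
    rcases hpq with h | ⟨h, h'⟩
    · by_contra hcon
      push_neg at hcon
      have hbd : b < d := by omega
      nlinarith
    · exact h'
  have hsum : a + b < c + d := by
    rcases hpq with h | ⟨h, h'⟩
    · exact h
    · exfalso
      have hdb : d < b := by omega
      nlinarith
  refine ⟨(a + 1, b), by omega, by omega, by omega, by omega, ?_⟩
  show a + 1 + b < c + d ∨ (a + 1 + b = c + d ∧ a + 1 < c)
  rcases Nat.lt_or_ge (a + 1 + b) (c + d) with h | h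
  · exact Or.inl h
  · have hsum' : a + 1 + b = c + d := by omega
    refine Or.inr ⟨hsum', ?_⟩
    by_contra hcon
    push_neg at hcon
    have hc' : c = a + 1 := by omega
    have hd' : d = b := by omega
    subst hc'; subst hd'
    nlinarith

theorem consecutive_exponent_pairs_independent
    (n m : ℕ) (hm : 1 ≤ m) (hnm : m ≤ n)
    (L : List (ℕ × ℕ))
    (hmem : ∀ p : ℕ × ℕ, p ∈ L ↔ p.1 ≤ n ∧ p.2 ≤ m ∧ 1 ≤ p.1 + p.2)
    (hsort : L.Chain' NlLt2) :
    ∀ i : ℕ, (h1 : i < L.length) → (h2 : i + 1 < L.length) →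
      ((L.get ⟨i, h1⟩).1 * (L.get ⟨i + 1, h2⟩).2 : ℤ) -
        ((L.get ⟨i, h1⟩).2 * (L.get ⟨i + 1, h2⟩).1 : ℤ) ≠ 0 := by
  intro i h1 h2 hzero
  set p := L.get ⟨i, h1⟩ with hpdef
  set q := L.get ⟨i + 1, h2⟩ with hqdef
  have hpq : NlLt2 p q := List.isChain_iff_getElem.mp hsort i (by omega)
  have hpmem : p ∈ L := L.get_mem _
  have hqmem : q ∈ L := L.get_mem _
  have heq : p.1 * q.2 = p.2 * q.1 := by
    have h : ((p.1 * q.2 : ℕ) : ℤ) = ((p.2 * q.1 : ℕ) : ℤ) := by push_cast; linarith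
    exact_mod_cast h
  obtain ⟨r, hr1, hr2, hr3, hpr, hrq⟩ :=
    nl_exists_between n m hm hnm p q ((hmem p).mp hpmem) ((hmem q).mp hqmem) hpq heq
  have hrmem : r ∈ L := (hmem r).mpr ⟨hr1, hr2, hr3⟩
  obtain ⟨j, hj⟩ := List.mem_iff_get.mp hrmem
  haveI : IsTrans (ℕ × ℕ) NlLt2 := ⟨fun _ _ _ => NlLt2.trans'⟩
  have hpw : L.Pairwise NlLt2 := List.isChain_iff_pairwise.mp hsort
  have hget : ∀ (k l : Fin L.length), k < l → NlLt2 (L.get k) (L.get l) :=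
    fun k l hkl => List.pairwise_iff_get.mp hpw k l hkl
  rcases Nat.lt_or_ge (j : ℕ) (i + 1) with hji | hji
  · rcases Nat.lt_or_ge (j : ℕ) i with hji' | hji'
    · exact NlLt2.asymm' hpr (hj ▸ hget j ⟨i, h1⟩ hji')
    · have : (j : ℕ) = i := by omega
      have : r = p := by rw [← hj, hpdef]; congr 1; exact Fin.ext this
      subst this
      exact NlLt2.asymm' hpr hpr
  · have : NlLt2 q r := by
      rcases Nat.lt_or_ge (i + 1) (j : ℕ) with h | h
      · exact hj ▸ hget ⟨i + 1, h2⟩ j h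
      · have : (j : ℕ) = i + 1 := by omega
        have hrq' : r = q := by rw [← hj, hqdef]; congr 1; exact Fin.ext this
        exact absurd (hrq' ▸ hrq) (fun hh => NlLt2.asymm' hh hh)
    exact NlLt2.asymm' hrq this
end

section
/- Let r ≥ 1, let k_1,…,k_r ≥ 1 be natural numbers, and let f : ℝ^r → ℝ be the monomial f(x) = x_1^{k_1}·x_2^{k_2}⋯x_r^{k_r}. Then for every x ∈ ℝ^r with all coordinates nonzero, the determinant of the Hessian matrix of f at x (the r×r matrix of second partial derivatives) equals (−1)^r·(1 − (k_1+⋯+k_r))·(k_1·k_2⋯k_r)·x_1^{r·k_1−2}·x_2^{r·k_2−2}⋯x_r^{r·k_r−2}. -/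
/-- The Hessian matrix of `f : ℝ^r → ℝ` at `x`: the matrix of second partial
derivatives `∂²f/∂x_i∂x_j (x)`. -/
noncomputable def hessian {r : ℕ} (f : (Fin r → ℝ) → ℝ) (x : Fin r → ℝ) :
    Matrix (Fin r) (Fin r) ℝ :=
  Matrix.of fun i j : Fin r =>
    fderiv ℝ (fun y : Fin r → ℝ => fderiv ℝ f y (Pi.single j 1)) x (Pi.single i 1)

open Finset Matrix in
private lemma hasFDerivAt_mono {r : ℕ} (m : Fin r → ℕ) (x : Fin r → ℝ) :
    HasFDerivAt (fun z : Fin r → ℝ => ∏ l : Fin r, z l ^ m l)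
      (∑ j : Fin r, ((∏ l ∈ Finset.univ.erase j, x l ^ m l) * ((m j : ℝ) * x j ^ (m j - 1))) •
        (ContinuousLinearMap.proj j : (Fin r → ℝ) →L[ℝ] ℝ)) x := by
  have h := HasFDerivAt.finset_prod (u := (Finset.univ : Finset (Fin r)))
    (g := fun i (z : Fin r → ℝ) => z i ^ m i)
    (g' := fun i => ((m i : ℝ) * x i ^ (m i - 1)) •
      (ContinuousLinearMap.proj i : (Fin r → ℝ) →L[ℝ] ℝ))
    (fun i _ => (hasDerivAt_pow (m i) (x i)).comp_hasFDerivAt x (hasFDerivAt_apply i x))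
  simpa [smul_smul] using h

private lemma fderiv_mono {r : ℕ} (m : Fin r → ℕ) (x : Fin r → ℝ) (i : Fin r) :
    fderiv ℝ (fun z : Fin r → ℝ => ∏ l : Fin r, z l ^ m l) x (Pi.single i 1) =
      (∏ l ∈ Finset.univ.erase i, x l ^ m l) * ((m i : ℝ) * x i ^ (m i - 1)) := by
  rw [(hasFDerivAt_mono m x).fderiv]
  simp [ContinuousLinearMap.proj_apply, Pi.single_apply, mul_ite]

private lemma hessian_entry {r : ℕ} (k : Fin r → ℕ) (hk : ∀ i, 1 ≤ k i)
    (x : Fin r → ℝ) (hx : ∀ i, x i ≠ 0) (i j : Fin r) :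
    hessian (fun z : Fin r → ℝ => ∏ l : Fin r, z l ^ k l) x i j =
      (x i)⁻¹ * ((x j)⁻¹ * ((∏ l : Fin r, x l ^ k l) *
        ((k i : ℝ) * ((k j : ℝ) - if i = j then 1 else 0)))) := by
  have hinner : (fun y : Fin r → ℝ =>
      fderiv ℝ (fun z : Fin r → ℝ => ∏ l : Fin r, z l ^ k l) y (Pi.single j 1)) =
      fun y => (k j : ℝ) * ∏ l : Fin r, y l ^ (Function.update k j (k j - 1)) l := by
    funext y
    rw [fderiv_mono]
    have h1 : ∏ l : Fin r, y l ^ (Function.update k j (k j - 1)) l =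
        (∏ l ∈ Finset.univ.erase j, y l ^ k l) * y j ^ (k j - 1) := by
      rw [← Finset.prod_erase_mul Finset.univ _ (Finset.mem_univ j), Function.update_self]
      congr 1
      exact Finset.prod_congr rfl fun l hl => by
        rw [Function.update_of_ne (Finset.ne_of_mem_erase hl)]
    rw [h1]; ring
  show fderiv ℝ (fun y : Fin r → ℝ =>
      fderiv ℝ (fun z : Fin r → ℝ => ∏ l : Fin r, z l ^ k l) y (Pi.single j 1)) x
        (Pi.single i 1) = _
  rw [hinner, fderiv_const_mul ((hasFDerivAt_mono _ x).differentiableAt) _,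
    ContinuousLinearMap.smul_apply, fderiv_mono]
  set m := Function.update k j (k j - 1) with hm
  by_cases hij : i = j
  · subst hij
    have hmi : m i = k i - 1 := Function.update_self _ _ _
    have hP : (∏ l ∈ Finset.univ.erase i, x l ^ m l) = ∏ l ∈ Finset.univ.erase i, x l ^ k l :=
      Finset.prod_congr rfl fun l hl => by
        rw [hm, Function.update_of_ne (Finset.ne_of_mem_erase hl)]
    have hM : (∏ l ∈ Finset.univ.erase i, x l ^ k l) * x i ^ k i = ∏ l : Fin r, x l ^ k l :=
      Finset.prod_erase_mul _ _ (Finset.mem_univ i)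
    rw [hP, ← hM, hmi, if_pos rfl]
    by_cases h1 : k i = 1
    · simp [h1]
    · have h2 : 2 ≤ k i := by have := hk i; omega
      have he : k i = (k i - 1 - 1) + 2 := by omega
      have hpow : x i ^ k i = x i ^ (k i - 1 - 1) * (x i * x i) := by
        conv_lhs => rw [he]
        ring
      rw [hpow]
      have hc : ((k i - 1 : ℕ) : ℝ) = (k i : ℝ) - 1 := by
        push_cast [Nat.cast_sub (hk i)]; ring
      rw [hc]
      field_simp
      rw [eq_div_iff (hx i), smul_eq_mul]
      ring
  · have hmi : m i = k i := Function.update_of_ne hij _ _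
    have hjmem : j ∈ Finset.univ.erase i := Finset.mem_erase.2 ⟨Ne.symm hij, Finset.mem_univ j⟩
    have hP : (∏ l ∈ Finset.univ.erase i, x l ^ m l) =
        (∏ l ∈ (Finset.univ.erase i).erase j, x l ^ k l) * x j ^ (k j - 1) := by
      rw [← Finset.prod_erase_mul _ _ hjmem, hm, Function.update_self]
      congr 1
      exact Finset.prod_congr rfl fun l hl => by
        rw [Function.update_of_ne (Finset.ne_of_mem_erase hl)]
    have hM : ((∏ l ∈ (Finset.univ.erase i).erase j, x l ^ k l) * x j ^ k j) * x i ^ k i =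
        ∏ l : Fin r, x l ^ k l := by
      rw [Finset.prod_erase_mul _ _ hjmem, Finset.prod_erase_mul _ _ (Finset.mem_univ i)]
    rw [hP, hmi, ← hM, if_neg hij]
    have hei : k i = (k i - 1) + 1 := by have := hk i; omega
    have hej : k j = (k j - 1) + 1 := by have := hk j; omega
    have hpi : x i ^ k i = x i ^ (k i - 1) * x i := by
      conv_lhs => rw [hei]
      ring
    have hpj : x j ^ k j = x j ^ (k j - 1) * x j := by
      conv_lhs => rw [hej]
      ring
    rw [hpi, hpj]
    field_simp
    rw [eq_div_iff (mul_ne_zero (hx i) (hx j))]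
    ring

open Finset Matrix in
theorem det_hessian_monomial (r : ℕ) (hr : 1 ≤ r) (k : Fin r → ℕ) (hk : ∀ i, 1 ≤ k i)
    (x : Fin r → ℝ) (hx : ∀ i, x i ≠ 0) :
    Matrix.det (hessian (fun z : Fin r → ℝ => ∏ l : Fin r, z l ^ k l) x) =
      (-1) ^ r * (1 - ∑ i : Fin r, (k i : ℝ)) * (∏ i : Fin r, (k i : ℝ)) *
        ∏ i : Fin r, x i ^ (r * k i - 2) := by
  set M : ℝ := ∏ l : Fin r, x l ^ k l with hMdef
  set C : Matrix (Fin r) (Fin r) ℝ :=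
    Matrix.of (fun a b : Fin r => (k b : ℝ) - if a = b then 1 else 0) with hCdef
  set B : Matrix (Fin r) (Fin r) ℝ :=
    Matrix.of (fun a b : Fin r => (k a : ℝ) * C a b) with hBdef
  have hH : hessian (fun z : Fin r → ℝ => ∏ l : Fin r, z l ^ k l) x =
      Matrix.of (fun i j : Fin r => (x i)⁻¹ *
        (Matrix.of (fun i' j' : Fin r => (x j')⁻¹ * (M • B) i' j') i j)) := by
    ext i j
    rw [hessian_entry k hk x hx i j]
    simp [hBdef, hCdef, Matrix.smul_apply, smul_eq_mul, hMdef]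
  rw [hH, Matrix.det_mul_column, Matrix.det_mul_row, Matrix.det_smul, hBdef,
    Matrix.det_mul_column]
  have hC : C = -(1 + Matrix.replicateCol (Fin 1) (fun _ => (-1 : ℝ)) *
      Matrix.replicateRow (Fin 1) (fun b => (k b : ℝ))) := by
    ext a b
    simp [hCdef, Matrix.one_apply, Matrix.mul_apply]
    split_ifs <;> ring
  have hdetC : C.det = (-1) ^ r * (1 - ∑ i : Fin r, (k i : ℝ)) := by
    rw [hC, Matrix.det_neg]
    erw [Matrix.det_one_add_replicateCol_mul_replicateRow (ι := Fin 1)]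
    simp [dotProduct, mul_comm]
    ring
  rw [hdetC, Fintype.card_fin]
  by_cases hs : (1 - ∑ i : Fin r, (k i : ℝ)) = 0
  · rw [hs]; simp
  · have hsn : (∑ i : Fin r, k i) ≠ 1 := by
      intro h
      apply hs
      have : (∑ i : Fin r, (k i : ℝ)) = ((∑ i : Fin r, k i : ℕ) : ℝ) := by push_cast; rfl
      rw [this, h]; norm_num
    have h2 : ∀ i, 2 ≤ r * k i := by
      intro i
      rcases Nat.lt_or_ge r 2 with h | h
      · have hr1 : r = 1 := by omega
        subst hr1
        have hsum : (∑ j : Fin 1, k j) = k i := by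
          rw [Fin.sum_univ_one]; congr 1; exact Subsingleton.elim _ _
        have := hk i
        omega
      · calc 2 = 2 * 1 := rfl
          _ ≤ r * k i := Nat.mul_le_mul h (hk i)
    have key : (∏ i : Fin r, (x i)⁻¹) * ((∏ i : Fin r, (x i)⁻¹) * M ^ r) =
        ∏ i : Fin r, x i ^ (r * k i - 2) := by
      have hMr : M ^ r = ∏ i : Fin r, x i ^ (k i * r) := by
        rw [hMdef, ← Finset.prod_pow]
        exact Finset.prod_congr rfl fun i _ => (pow_mul (x i) (k i) r).symm
      rw [hMr, ← Finset.prod_mul_distrib, ← Finset.prod_mul_distrib]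
      refine Finset.prod_congr rfl fun i _ => ?_
      have he : k i * r = (r * k i - 2) + 2 := by rw [mul_comm]; have := h2 i; omega
      rw [he, pow_add]
      have hxi := hx i
      field_simp
    calc (∏ i : Fin r, (x i)⁻¹) * ((∏ i : Fin r, (x i)⁻¹) *
          (M ^ r * ((∏ i : Fin r, (k i : ℝ)) * ((-1) ^ r * (1 - ∑ i : Fin r, (k i : ℝ)))))) =
        ((-1) ^ r * (1 - ∑ i : Fin r, (k i : ℝ)) * ∏ i : Fin r, (k i : ℝ)) *
          ((∏ i : Fin r, (x i)⁻¹) * ((∏ i : Fin r, (x i)⁻¹) * M ^ r)) := by ring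
      _ = _ := by rw [key]
end

section
/- Let r ≥ 2, let k_1,…,k_r ≥ 1 be natural numbers, and let f : ℝ^r → ℝ be the monomial f(x) = x_1^{k_1}⋯x_r^{k_r}. Let H(x) denote the Hessian matrix of f at x (the transposed Jacobian matrix of the gradient of f). Then the Gram determinant det(H(x)·H(x)ᵀ) is nonzero for all x ∈ ℝ^r outside a set of Lebesgue measure zero; equivalently, H(x) has maximal rank r for almost every x ∈ ℝ^r. -/
open MeasureTheory Matrix

private lemma hasFDerivAt_prod_pow {r : ℕ} (m : Fin r → ℕ) (x : Fin r → ℝ) :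
    HasFDerivAt (fun y : Fin r → ℝ => ∏ l, y l ^ m l)
      (∑ l, (∏ j ∈ Finset.univ.erase l, x j ^ m j) •
        (((m l : ℝ) * x l ^ (m l - 1)) •
          (ContinuousLinearMap.proj l : (Fin r → ℝ) →L[ℝ] ℝ))) x := by
  have hproj : ∀ l : Fin r, HasFDerivAt (fun y : Fin r → ℝ => y l)
      (ContinuousLinearMap.proj l : (Fin r → ℝ) →L[ℝ] ℝ) x := fun l =>
    (ContinuousLinearMap.proj l : (Fin r → ℝ) →L[ℝ] ℝ).hasFDerivAt
  exact HasFDerivAt.finset_prod fun l _ =>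
    (hasDerivAt_pow (m l) (x l)).comp_hasFDerivAt x (hproj l)

private lemma fderiv_prod_pow_single {r : ℕ} (m : Fin r → ℕ) (x : Fin r → ℝ) (i : Fin r) :
    fderiv ℝ (fun y : Fin r → ℝ => ∏ l, y l ^ m l) x (Pi.single i 1) =
      (m i : ℝ) * x i ^ (m i - 1) * ∏ l ∈ Finset.univ.erase i, x l ^ m l := by
  rw [(hasFDerivAt_prod_pow m x).fderiv]
  simp only [ContinuousLinearMap.coe_sum', Finset.sum_apply,
    ContinuousLinearMap.coe_smul', Pi.smul_apply, ContinuousLinearMap.proj_apply,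
    Pi.single_apply, smul_eq_mul]
  rw [Finset.sum_eq_single i]
  · simp; ring
  · intro b _ hb
    simp [hb]
  · simp

private lemma fderiv_monomial {r : ℕ} (k : Fin r → ℕ) (hk : ∀ i, 1 ≤ k i) (j : Fin r)
    (y : Fin r → ℝ) :
    fderiv ℝ (fun z : Fin r → ℝ => ∏ l, z l ^ k l) y (Pi.single j 1) =
      (k j : ℝ) * ∏ l, y l ^ (k l - if l = j then 1 else 0) := by
  rw [fderiv_prod_pow_single]
  have hsplit : (∏ l, y l ^ (k l - if l = j then 1 else 0)) =
      y j ^ (k j - 1) * ∏ l ∈ Finset.univ.erase j, y l ^ k l := by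
    rw [← Finset.mul_prod_erase Finset.univ
      (fun l => y l ^ (k l - if l = j then 1 else 0)) (Finset.mem_univ j)]
    congr 1
    · simp
    · exact Finset.prod_congr rfl fun l hl => by simp [Finset.ne_of_mem_erase hl]
  rw [hsplit]
  ring

private lemma hessian_monomial_apply {r : ℕ} (k : Fin r → ℕ) (hk : ∀ i, 1 ≤ k i)
    (x : Fin r → ℝ) (i j : Fin r) :
    hessian (fun z : Fin r → ℝ => ∏ l, z l ^ k l) x i j =
      (k j : ℝ) * (((k i - if i = j then 1 else 0 : ℕ) : ℝ) *
        x i ^ ((k i - if i = j then 1 else 0) - 1) *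
        ∏ l ∈ Finset.univ.erase i, x l ^ (k l - if l = j then 1 else 0)) := by
  show fderiv ℝ (fun y : Fin r → ℝ =>
      fderiv ℝ (fun z : Fin r → ℝ => ∏ l, z l ^ k l) y (Pi.single j 1)) x (Pi.single i 1) = _
  have h1 : (fun y : Fin r → ℝ =>
      fderiv ℝ (fun z : Fin r → ℝ => ∏ l, z l ^ k l) y (Pi.single j 1)) =
      fun y => (k j : ℝ) * ∏ l, y l ^ (k l - if l = j then 1 else 0) :=
    funext (fderiv_monomial k hk j)
  rw [h1]
  have h2 := ((hasFDerivAt_prod_pow (fun l => k l - if l = j then 1 else 0) x).const_mul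
    ((k j : ℝ))).fderiv
  rw [h2]
  rw [ContinuousLinearMap.smul_apply, smul_eq_mul]
  congr 1
  have h3 := fderiv_prod_pow_single (fun l => k l - if l = j then 1 else 0) x i
  rw [(hasFDerivAt_prod_pow (fun l => k l - if l = j then 1 else 0) x).fderiv] at h3
  exact h3

private lemma hessian_eq {r : ℕ} (k : Fin r → ℕ) (hk : ∀ i, 1 ≤ k i) (x : Fin r → ℝ)
    (hx : ∀ l, x l ≠ 0) :
    hessian (fun z : Fin r → ℝ => ∏ l, z l ^ k l) x =
      (∏ l, x l ^ k l) • (Matrix.diagonal (fun i => (x i)⁻¹) *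
        (Matrix.of fun i j => (k i : ℝ) * k j - if i = j then (k i : ℝ) else 0) *
        Matrix.diagonal (fun i => (x i)⁻¹)) := by
  ext i j
  rw [hessian_monomial_apply k hk]
  rw [Matrix.smul_apply, Matrix.mul_diagonal, Matrix.diagonal_mul, Matrix.of_apply,
    smul_eq_mul]
  by_cases hij : i = j
  · subst hij
    simp only [eq_self_iff_true, if_true]
    rw [← Finset.mul_prod_erase Finset.univ (fun l => x l ^ k l) (Finset.mem_univ i)]
    have hprod : (∏ l ∈ Finset.univ.erase i, x l ^ (k l - if l = i then 1 else 0)) =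
        ∏ l ∈ Finset.univ.erase i, x l ^ k l :=
      Finset.prod_congr rfl fun l hl => by simp [Finset.ne_of_mem_erase hl]
    rw [hprod]
    rcases Nat.lt_or_ge (k i) 2 with h2 | h2
    · have h1 : k i = 1 := le_antisymm (by omega) (hk i)
      simp [h1]
    · obtain ⟨n, hn⟩ : ∃ n, k i = n + 2 := ⟨k i - 2, by omega⟩
      have hxi := hx i
      have e1 : k i - 1 - 1 = n := by omega
      have e2 : ((k i - 1 : ℕ) : ℝ) = (n : ℝ) + 1 := by
        have : k i - 1 = n + 1 := by omega
        rw [this]; push_cast; ring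
      rw [e1, e2, hn]
      have e3 : x i ^ (n + 2) = x i ^ n * x i * x i := by ring
      rw [e3]
      field_simp [hxi]
      push_cast; ring
  · simp only [if_neg hij]
    have hji : j ∈ Finset.univ.erase i := Finset.mem_erase.2 ⟨Ne.symm hij, Finset.mem_univ j⟩
    rw [← Finset.mul_prod_erase _ (fun l => x l ^ (k l - if l = j then 1 else 0)) hji]
    have hprod : (∏ l ∈ (Finset.univ.erase i).erase j,
        x l ^ (k l - if l = j then 1 else 0)) =
        ∏ l ∈ (Finset.univ.erase i).erase j, x l ^ k l :=
      Finset.prod_congr rfl fun l hl => by simp [Finset.ne_of_mem_erase hl]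
    rw [hprod, if_pos rfl]
    rw [← Finset.mul_prod_erase Finset.univ (fun l => x l ^ k l) (Finset.mem_univ i),
      ← Finset.mul_prod_erase _ (fun l => x l ^ k l) hji]
    obtain ⟨a, ha⟩ : ∃ a, k i = a + 1 := ⟨k i - 1, by have := hk i; omega⟩
    obtain ⟨b, hb⟩ : ∃ b, k j = b + 1 := ⟨k j - 1, by have := hk j; omega⟩
    have hxi := hx i
    have hxj := hx j
    rw [ha, hb]
    simp only [Nat.add_sub_cancel]
    field_simp [hxi, hxj]
    simp only [Nat.sub_zero, Nat.add_sub_cancel_left]; push_cast; ring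

private lemma detC_ne_zero {r : ℕ} (hr : 2 ≤ r) (k : Fin r → ℕ) (hk : ∀ i, 1 ≤ k i) :
    Matrix.det (Matrix.of fun i j : Fin r =>
      (k i : ℝ) * k j - if i = j then (k i : ℝ) else 0) ≠ 0 := by
  have hfac : (Matrix.of fun i j : Fin r =>
      (k i : ℝ) * k j - if i = j then (k i : ℝ) else 0) =
      Matrix.diagonal (fun i => (k i : ℝ)) *
        (Matrix.replicateCol (Fin 1) (1 : Fin r → ℝ) * Matrix.replicateRow (Fin 1) (fun i => (k i : ℝ)) - 1) := by
    ext i j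
    rw [Matrix.diagonal_mul, Matrix.of_apply]
    simp only [Matrix.sub_apply, Matrix.mul_apply, Matrix.replicateCol_apply, Matrix.replicateRow_apply,
      Matrix.one_apply, Fin.sum_univ_one, Pi.one_apply]
    by_cases hij : i = j <;> simp [hij] <;> ring
  have hneg : Matrix.replicateCol (Fin 1) (1 : Fin r → ℝ) * Matrix.replicateRow (Fin 1) (fun i => (k i : ℝ)) - 1 =
      -(1 + Matrix.replicateCol (Fin 1) (1 : Fin r → ℝ) *
        Matrix.replicateRow (Fin 1) (fun i => -(k i : ℝ))) := by
    ext i j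
    simp [Matrix.mul_apply, Matrix.one_apply, Fin.sum_univ_one]
    by_cases hij : i = j <;> simp [hij] <;> ring
  rw [hfac, Matrix.det_mul, Matrix.det_diagonal, hneg, Matrix.det_neg]
  erw [Matrix.det_one_add_replicateCol_mul_replicateRow (ι := Fin 1)]
  have hsum : (fun i => -(k i : ℝ)) ⬝ᵥ (1 : Fin r → ℝ) = -∑ i, (k i : ℝ) := by
    simp [dotProduct]
  rw [hsum]
  apply mul_ne_zero
  · exact Finset.prod_ne_zero_iff.2 fun i _ => Nat.cast_ne_zero.2 (by have := hk i; omega)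
  apply mul_ne_zero
  · simp [pow_ne_zero]
  · have h2 : (2 : ℝ) ≤ ∑ i, (k i : ℝ) := by
      calc (2 : ℝ) ≤ (r : ℝ) := by exact_mod_cast hr
        _ = ∑ _i : Fin r, (1 : ℝ) := by simp
        _ ≤ ∑ i, (k i : ℝ) := Finset.sum_le_sum fun i _ => by exact_mod_cast hk i
    intro h
    have : ∑ i, (k i : ℝ) = 1 := by linarith
    linarith

theorem gram_det_hessian_monomial_ae_ne_zero
    (r : ℕ) (hr : 2 ≤ r) (k : Fin r → ℕ) (hk : ∀ i, 1 ≤ k i) :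
    ∀ᵐ x : Fin r → ℝ ∂(volume : Measure (Fin r → ℝ)),
      Matrix.det (hessian (fun z : Fin r → ℝ => ∏ l : Fin r, z l ^ k l) x *
          (hessian (fun z : Fin r → ℝ => ∏ l : Fin r, z l ^ k l) x)ᵀ) ≠ 0 ∧
        Matrix.rank (hessian (fun z : Fin r → ℝ => ∏ l : Fin r, z l ^ k l) x) = r := by
  have h0 : ∀ᵐ x : Fin r → ℝ ∂(volume : Measure (Fin r → ℝ)), ∀ i, x i ≠ (0 : ℝ) := by
    rw [MeasureTheory.volume_pi]
    exact ae_all_iff.2 fun i => MeasureTheory.Measure.ae_eval_ne _ i 0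
  filter_upwards [h0] with x hx
  have hdet : (hessian (fun z : Fin r → ℝ => ∏ l : Fin r, z l ^ k l) x).det ≠ 0 := by
    rw [hessian_eq k hk x hx, Matrix.det_smul, Matrix.det_mul, Matrix.det_mul,
      Matrix.det_diagonal]
    apply mul_ne_zero
    · apply pow_ne_zero
      exact Finset.prod_ne_zero_iff.2 fun l _ => pow_ne_zero _ (hx l)
    apply mul_ne_zero
    apply mul_ne_zero
    · exact Finset.prod_ne_zero_iff.2 fun l _ => inv_ne_zero (hx l)
    · exact detC_ne_zero hr k hk
    · exact Finset.prod_ne_zero_iff.2 fun l _ => inv_ne_zero (hx l)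
  constructor
  · rw [Matrix.det_mul, Matrix.det_transpose]
    exact mul_ne_zero hdet hdet
  · rw [Matrix.rank_of_isUnit _ ((Matrix.isUnit_iff_isUnit_det _).2
      (isUnit_iff_ne_zero.2 hdet)), Fintype.card_fin]
end

section
/- Let r ≥ 1, m ≥ 1 and k ≥ m be integers. Let φ : ℝ^r → ℝ^m have coordinates φ_j(x) = (x_1⋯x_r)^{m+1−j} for 1 ≤ j ≤ m, and define ψ : (ℝ^r)^k → ℝ^m by ψ(x̄_1,…,x̄_k) = φ(x̄_1) + φ(x̄_2) + ⋯ + φ(x̄_k). Then the set of points of (ℝ^r)^k ≅ ℝ^{kr} at which the Jacobian matrix of ψ has rank strictly less than m has Lebesgue measure zero; in particular ψ is regular almost everywhere on [0,1]^{kr}. -/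
open MeasureTheory

lemma measure_zero_of_update_sections {ι : Type*} [Fintype ι] [DecidableEq ι]
    {X : Type*} [MeasureSpace X] [SigmaFinite (volume : Measure X)] [Nonempty X] (p : ι)
    {S : Set (ι → X)} (hS : MeasurableSet S)
    (h : ∀ x : ι → X, volume {t : X | Function.update x p t ∈ S} = 0) :
    volume S = 0 := by
  classical
  let e₁ : (ι → X) ≃ᵐ ({q : ι // q ≠ p} → X) × ({q : ι // ¬ q ≠ p} → X) :=
    MeasurableEquiv.piEquivPiSubtypeProd (fun _ : ι => X) (fun q => q ≠ p)
  have h₁ : MeasurePreserving e₁ :=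
    volume_preserving_piEquivPiSubtypeProd (fun _ : ι => X) (fun q => q ≠ p)
  have key : (volume.prod volume) (e₁.symm ⁻¹' S) = volume S :=
    (MeasurePreserving.symm e₁ h₁).measure_preimage hS.nullMeasurableSet
  rw [← key, Measure.measure_prod_null (e₁.symm.measurable hS)]
  refine Filter.Eventually.of_forall fun a => ?_
  set d : {q : ι // ¬ q ≠ p} := ⟨p, fun hq => hq rfl⟩ with hd
  set x₀ : ι → X := fun q => if hq : q ≠ p then a ⟨q, hq⟩ else Classical.arbitrary X with hx₀
  have hsub : (Prod.mk a ⁻¹' (e₁.symm ⁻¹' S)) ⊆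
      Function.eval d ⁻¹' {t : X | Function.update x₀ p t ∈ S} := by
    intro g hg
    have hmem : e₁.symm (a, g) ∈ S := hg
    have heq : e₁.symm (a, g) = Function.update x₀ p (g d) := by
      funext q
      by_cases hq : q = p
      · subst hq
        simp [e₁, d, MeasurableEquiv.piEquivPiSubtypeProd, Equiv.piEquivPiSubtypeProd,
          Function.update]
      · simp [e₁, x₀, MeasurableEquiv.piEquivPiSubtypeProd, Equiv.piEquivPiSubtypeProd,
          Function.update, hq]
    rw [heq] at hmem
    exact hmem
  refine measure_mono_null hsub ?_
  exact Measure.pi_eval_preimage_null _ (h x₀)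

lemma nested_sections {k r : ℕ} (l : Fin k) (i : Fin r) {S : Set (Fin k → Fin r → ℝ)}
    (hS : MeasurableSet S)
    (h : ∀ (x : Fin k → Fin r → ℝ) (v : Fin r → ℝ),
      {t : ℝ | Function.update x l (Function.update v i t) ∈ S}.Finite) :
    volume S = 0 := by
  apply measure_zero_of_update_sections l hS
  intro x
  have hmeas : MeasurableSet {v : Fin r → ℝ | Function.update x l v ∈ S} :=
    (measurable_update x) hS
  apply measure_zero_of_update_sections i hmeas
  intro v
  exact (h x v).measure_zero volume

lemma jacobian_entry {k r : ℕ} (n : ℕ) (x : Fin k → Fin r → ℝ) (p : Fin k × Fin r) :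
    fderiv ℝ (fun y : Fin k → Fin r → ℝ => ∑ l : Fin k, (∏ i : Fin r, y l i) ^ n) x
      (Pi.single p.1 (Pi.single p.2 1)) =
    (n : ℝ) * (∏ i : Fin r, x p.1 i) ^ (n - 1) *
      ∏ i ∈ Finset.univ.erase p.2, x p.1 i := by
  classical
  have hsummand : ∀ l : Fin k, HasFDerivAt
      (fun y : Fin k → Fin r → ℝ => (∏ i : Fin r, y l i) ^ n)
      (((n : ℝ) * (∏ i : Fin r, x l i) ^ (n - 1)) •
        (∑ i : Fin r, (∏ i' ∈ Finset.univ.erase i, x l i') •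
          ((ContinuousLinearMap.proj i).comp
            (ContinuousLinearMap.proj (R := ℝ) (φ := fun _ : Fin k => Fin r → ℝ) l)))) x := by
    intro l
    have hprod : HasFDerivAt (fun y : Fin k → Fin r → ℝ => ∏ i : Fin r, y l i)
        (∑ i : Fin r, (∏ i' ∈ Finset.univ.erase i, x l i') •
          ((ContinuousLinearMap.proj i).comp
            (ContinuousLinearMap.proj (R := ℝ) (φ := fun _ : Fin k => Fin r → ℝ) l))) x :=
      HasFDerivAt.finset_prod (fun i _ =>
        (((ContinuousLinearMap.proj i).comp
          (ContinuousLinearMap.proj (R := ℝ) (φ := fun _ : Fin k => Fin r → ℝ) l))).hasFDerivAt)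
    exact (hasDerivAt_pow n (∏ i : Fin r, x l i)).comp_hasFDerivAt x hprod
  have hsum := HasFDerivAt.fun_sum (u := Finset.univ) (fun l (_ : l ∈ Finset.univ) => hsummand l)
  rw [hsum.fderiv]
  simp only [ContinuousLinearMap.coe_sum', Finset.sum_apply, ContinuousLinearMap.coe_smul',
    Pi.smul_apply, ContinuousLinearMap.coe_comp', Function.comp_apply,
    ContinuousLinearMap.proj_apply, smul_eq_mul, Pi.single_apply]
  rw [Finset.sum_eq_single p.1]
  · simp only [if_pos rfl]
    rw [Finset.sum_eq_single p.2]
    · simp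
    · intro i _ hi
      simp [hi]
    · simp
  · intro l _ hl
    simp [hl]
  · simp

section Aux
variable {k r : ℕ}

lemma good_rank (r m k : ℕ) (hr : 1 ≤ r) (hm : 1 ≤ m) (hk : m ≤ k)
    (x : Fin k → Fin r → ℝ)
    (hnz : ∀ l i, x l i ≠ 0)
    (hdist : ∀ l l' : Fin k, l ≠ l' → (∏ i, x l i) ≠ (∏ i, x l' i)) :
    ¬ (Matrix.rank (Matrix.of fun (j : Fin m) (p : Fin k × Fin r) =>
        fderiv ℝ
          (fun y : Fin k → Fin r → ℝ =>
            ∑ l : Fin k, (∏ i : Fin r, y l i) ^ (m - (j : ℕ))) x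
          (Pi.single p.1 (Pi.single p.2 1))) < m) := by
  classical
  set M : Matrix (Fin m) (Fin k × Fin r) ℝ := Matrix.of fun (j : Fin m) (p : Fin k × Fin r) =>
      fderiv ℝ
        (fun y : Fin k → Fin r → ℝ =>
          ∑ l : Fin k, (∏ i : Fin r, y l i) ^ (m - (j : ℕ))) x
        (Pi.single p.1 (Pi.single p.2 1)) with hM
  set i0 : Fin r := ⟨0, hr⟩ with hi0
  set g : Fin m → Fin k := Fin.castLE hk with hg
  set w : Fin m → ℝ := fun l => ∏ i, x (g l) i with hw
  set Q : Fin m → ℝ := fun l => ∏ i ∈ Finset.univ.erase i0, x (g l) i with hQ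
  set a : Fin m → ℝ := fun j => ((m - (j : ℕ) : ℕ) : ℝ) with ha
  set N : Matrix (Fin m) (Fin m) ℝ := Matrix.of fun j l => M j (g l, i0) with hN
  set E : Matrix (Fin k × Fin r) (Fin m) ℝ :=
    Matrix.of fun p l => if p = (g l, i0) then (1 : ℝ) else 0 with hE
  have hNE : N = M * E := by
    ext j l
    simp [hN, hE, Matrix.mul_apply, mul_ite, mul_one, mul_zero]
  have hMentry : ∀ (j : Fin m) (p : Fin k × Fin r),
      M j p = ((m - (j : ℕ) : ℕ) : ℝ) * (∏ i : Fin r, x p.1 i) ^ (m - (j : ℕ) - 1) *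
        ∏ i ∈ Finset.univ.erase p.2, x p.1 i := by
    intro j p
    exact jacobian_entry (m - (j : ℕ)) x p
  set V : Matrix (Fin m) (Fin m) ℝ := Matrix.of fun j l => w l ^ (m - 1 - (j : ℕ)) with hV
  have hfac : N = Matrix.diagonal a * (V * Matrix.diagonal Q) := by
    ext j l
    rw [Matrix.diagonal_mul, Matrix.mul_diagonal]
    have hexp : m - 1 - (j : ℕ) = m - (j : ℕ) - 1 := by omega
    simp only [hN, Matrix.of_apply, hMentry, hV, ha, hexp]
    ring
  have hVdet : V.det ≠ 0 := by
    have hsub : V.submatrix Fin.revPerm Fin.revPerm =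
        (Matrix.vandermonde (fun l : Fin m => w (Fin.rev l))).transpose := by
      ext j l
      simp [hV, Matrix.vandermonde, Fin.val_rev]
      congr 1
      have := j.isLt
      omega
    have h1 : V.det = (Matrix.vandermonde (fun l : Fin m => w (Fin.rev l))).det := by
      rw [← Matrix.det_submatrix_equiv_self Fin.revPerm V, hsub, Matrix.det_transpose]
    rw [h1, Matrix.det_vandermonde]
    apply Finset.prod_ne_zero_iff.mpr
    intro i _
    apply Finset.prod_ne_zero_iff.mpr
    intro j hj
    rw [Finset.mem_Ioi] at hj
    have hne : Fin.rev j ≠ Fin.rev i := by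
      simp only [ne_eq, Fin.rev_inj]
      exact ne_of_gt hj
    have : g (Fin.rev j) ≠ g (Fin.rev i) := fun h => hne (Fin.castLE_injective hk h)
    exact sub_ne_zero_of_ne (hdist _ _ this)
  have hNdet : N.det ≠ 0 := by
    rw [hfac, Matrix.det_mul, Matrix.det_mul, Matrix.det_diagonal, Matrix.det_diagonal]
    refine mul_ne_zero (Finset.prod_ne_zero_iff.mpr fun j _ => ?_)
      (mul_ne_zero hVdet (Finset.prod_ne_zero_iff.mpr fun l _ => ?_))
    · rw [ha]
      have := j.isLt
      exact Nat.cast_ne_zero.mpr (by omega)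
    · exact Finset.prod_ne_zero_iff.mpr fun i _ => hnz _ _
  intro hrank
  have h1 : N.rank = m := by
    rw [Matrix.rank_of_isUnit N ((Matrix.isUnit_iff_isUnit_det N).mpr
      (isUnit_iff_ne_zero.mpr hNdet))]
    simp
  have h2 : N.rank ≤ M.rank := by
    rw [hNE]
    exact Matrix.rank_mul_le_left M E
  omega

theorem sum_monomial_map_jacobian_ae_regular (r m k : ℕ) (hr : 1 ≤ r) (hm : 1 ≤ m)
    (hk : m ≤ k) :
    volume {x : Fin k → Fin r → ℝ |
      Matrix.rank (Matrix.of fun (j : Fin m) (p : Fin k × Fin r) =>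
        fderiv ℝ
          (fun y : Fin k → Fin r → ℝ =>
            ∑ l : Fin k, (∏ i : Fin r, y l i) ^ (m - (j : ℕ))) x
          (Pi.single p.1 (Pi.single p.2 1))) < m} = 0 := by
  classical
  set i0 : Fin r := ⟨0, hr⟩ with hi0
  set A : Fin k → Fin r → Set (Fin k → Fin r → ℝ) :=
    fun l i => {x | x l i = 0} with hA
  set B : Fin k → Fin k → Set (Fin k → Fin r → ℝ) :=
    fun l l' => {x | (∏ i, x l i) = (∏ i, x l' i) ∧ ∀ i, x l i ≠ 0} with hB
  have hcoord : ∀ (l : Fin k) (i : Fin r),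
      Measurable (fun x : Fin k → Fin r → ℝ => x l i) :=
    fun l i => (measurable_pi_apply i).comp (measurable_pi_apply l)
  have hAnull : ∀ l i, volume (A l i) = 0 := by
    intro l i
    apply nested_sections l i
    · exact (hcoord l i) (measurableSet_singleton 0)
    · intro x v
      refine Set.Finite.subset (Set.finite_singleton 0) ?_
      intro t ht
      have : Function.update x l (Function.update v i t) l i = 0 := ht
      simpa [Function.update_self] using this
  have hBnull : ∀ l l', l ≠ l' → volume (B l l') = 0 := by
    intro l l' hne
    apply nested_sections l i0
    · refine MeasurableSet.inter ?_ ?_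
      · exact measurableSet_eq_fun
          (Finset.measurable_prod Finset.univ fun i _ => hcoord l i)
          (Finset.measurable_prod Finset.univ fun i _ => hcoord l' i)
      · have : {x : Fin k → Fin r → ℝ | ∀ i, x l i ≠ 0} =
            ⋂ i, (fun x : Fin k → Fin r → ℝ => x l i) ⁻¹' ({0}ᶜ) := by
          ext x; simp
        show MeasurableSet {x : Fin k → Fin r → ℝ | ∀ i, x l i ≠ 0}
        rw [this]
        exact MeasurableSet.iInter fun i => (hcoord l i) (measurableSet_singleton 0).compl
    · intro x v
      refine Set.Subsingleton.finite ?_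
      intro t₁ h₁ t₂ h₂
      simp only [hB, Set.mem_setOf_eq] at h₁ h₂
      have hyl : ∀ t, Function.update x l (Function.update v i0 t) l = Function.update v i0 t :=
        fun t => Function.update_self l _ x
      have hyl' : ∀ t, Function.update x l (Function.update v i0 t) l' = x l' :=
        fun t => Function.update_of_ne (Ne.symm hne) _ x
      rw [hyl, hyl'] at h₁ h₂
      have hprod : ∀ t : ℝ, (∏ i, Function.update v i0 t i) =
          t * ∏ i ∈ Finset.univ.erase i0, v i :=
        fun t => by
          rw [Finset.prod_update_of_mem (Finset.mem_univ i0) v t, Finset.sdiff_singleton_eq_erase]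
      have hc : (∏ i ∈ Finset.univ.erase i0, v i) ≠ 0 := by
        refine Finset.prod_ne_zero_iff.mpr fun i hi => ?_
        have hii0 : i ≠ i0 := (Finset.mem_erase.mp hi).1
        have := h₁.2 i
        rwa [Function.update_of_ne hii0] at this
      have e₁ : t₁ * ∏ i ∈ Finset.univ.erase i0, v i = ∏ i, x l' i := by
        rw [← hprod]; exact h₁.1
      have e₂ : t₂ * ∏ i ∈ Finset.univ.erase i0, v i = ∏ i, x l' i := by
        rw [← hprod]; exact h₂.1
      exact mul_right_cancel₀ hc (e₁.trans e₂.symm)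
  have hsubset : {x : Fin k → Fin r → ℝ |
      Matrix.rank (Matrix.of fun (j : Fin m) (p : Fin k × Fin r) =>
        fderiv ℝ
          (fun y : Fin k → Fin r → ℝ =>
            ∑ l : Fin k, (∏ i : Fin r, y l i) ^ (m - (j : ℕ))) x
          (Pi.single p.1 (Pi.single p.2 1))) < m} ⊆
      (⋃ l, ⋃ i, A l i) ∪ ⋃ l, ⋃ l', ⋃ (_ : l ≠ l'), B l l' := by
    intro x hx
    by_contra hxU
    simp only [Set.mem_union, Set.mem_iUnion, not_or, not_exists] at hxU
    obtain ⟨h1, h2⟩ := hxU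
    have hnz : ∀ l i, x l i ≠ 0 := fun l i => h1 l i
    have hdist : ∀ l l' : Fin k, l ≠ l' → (∏ i, x l i) ≠ (∏ i, x l' i) := by
      intro l l' hne heq
      exact h2 l l' hne ⟨heq, fun i => hnz l i⟩
    exact good_rank r m k hr hm hk x hnz hdist hx
  refine measure_mono_null hsubset ?_
  refine measure_union_null ?_ ?_
  · exact measure_iUnion_null fun l => measure_iUnion_null fun i => hAnull l i
  · exact measure_iUnion_null fun l => measure_iUnion_null fun l' =>
      measure_iUnion_null fun hne => hBnull l l' hne
end Aux
end
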